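/- For any positive integer n, n times the least common multiple of the binomial coefficients C(n-1,0), C(n-1,1), ..., C(n-1, ⌊(n-1)/2⌋) equals the least common multiple of 1, 2, ..., n; that is, n·lcm{C(n-1,k) : 0 ≤ k ≤ ⌊(n-1)/2⌋} = lcm(1, 2, ..., n). -/

import Mathlib

/-!
From `n * C(n - 1, k - 1) = k * C(n, k)` and Kummer's theorem, `v_p(k * C(n, k)) ≤ log_p n`, which is
`v_p(lcm(1, ..., n))`; as `k ∣ k * C(n, k)`, the numbers `k * C(n, k)` for `1 ≤ k ≤ n` therefore have
the same lcm as `1, ..., n`. The symmetry `C(n - 1, k) = C(n - 1, n - 1 - k)` halves the range.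
-/

open Finset

theorem Finset.lcm_mul_left {α β : Type*} [CommMonoidWithZero α] [StrongNormalizedGCDMonoid α]
    {s : Finset β} (hs : s.Nonempty) (f : β → α) (a : α) :
    (s.lcm fun x ↦ a * f x) = normalize a * s.lcm f := by
  classical
  induction hs using Finset.Nonempty.cons_induction with
  | singleton b => simp
  | cons b s hb hs ih =>
    rw [cons_eq_insert, lcm_insert, lcm_insert, ih, ← _root_.lcm_mul_left]
    exact lcm_eq_of_associated_right ((normalize_associated a).mul_right _) _

namespace Nat

/- By Kummer's theorem `v_p(C(n, k))` counts the positions `1 ≤ i ≤ log p n` at which the base-`p`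
addition `k + (n - k)` carries; there is no carry at a position `i` with `p ^ i ∣ k`, and `v_p(k)`
counts exactly those positions. -/
theorem factorization_choose_add_factorization_le_log {p n k : ℕ} (hp : p.Prime) (hk0 : k ≠ 0)
    (hkn : k ≤ n) : (choose n k).factorization p + k.factorization p ≤ log p n := by
  have hdisj : Disjoint {i ∈ Ico 1 (log p n + 1) | p ^ i ≤ k % p ^ i + (n - k) % p ^ i}
      {i ∈ Ico 1 (log p n + 1) | p ^ i ∣ k} := by
    simp +contextual [Finset.disjoint_right, dvd_iff_mod_eq_zero, Nat.mod_lt _ (pow_pos hp.pos _)]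
  have hk_lt : k < p ^ (log p n + 1) := hkn.trans_lt (lt_pow_succ_log_self hp.one_lt n)
  rw [factorization_choose hp hkn (lt_add_one _),
    factorization_eq_card_pow_dvd_of_lt hp (pos_of_ne_zero hk0) hk_lt,
    ← card_union_of_disjoint hdisj, filter_union_right]
  exact (card_filter_le _ _).trans_eq (card_Ico _ _)

theorem mul_choose_dvd_lcmUpto {n k : ℕ} (hk0 : k ≠ 0) (hkn : k ≤ n) :
    k * n.choose k ∣ lcmUpto n := by
  have hchoose : n.choose k ≠ 0 := (choose_pos hkn).ne'
  rw [← factorization_prime_le_iff_dvd (mul_ne_zero hk0 hchoose) (lcmUpto_ne_zero n)]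
  intro p hp
  rw [factorization_mul hk0 hchoose, factorization_lcmUpto n hp, Finsupp.add_apply, add_comm]
  exact factorization_choose_add_factorization_le_log hp hk0 hkn

theorem lcm_Icc_mul_choose_eq_lcmUpto (n : ℕ) :
    (Icc 1 n).lcm (fun k ↦ k * n.choose k) = lcmUpto n :=
  dvd_antisymm
    (Finset.lcm_dvd fun _ hk ↦ mul_choose_dvd_lcmUpto (by grind) (mem_Icc.1 hk).2)
    (lcm_mono_fun fun k _ ↦ dvd_mul_right k _)

theorem succ_mul_lcm_choose_eq_lcmUpto (m : ℕ) :
    (m + 1) * (range (m + 1)).lcm m.choose = lcmUpto (m + 1) :=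
  calc (m + 1) * (range (m + 1)).lcm m.choose
      = (range (m + 1)).lcm (fun k ↦ (m + 1) * m.choose k) := by
        rw [Finset.lcm_mul_left nonempty_range_add_one, normalize_eq]
    _ = (range (m + 1)).lcm (fun k ↦ (k + 1) * (m + 1).choose (k + 1)) :=
        lcm_congr rfl fun k _ ↦ by rw [add_one_mul_choose_eq, mul_comm]
    _ = (Icc 1 (m + 1)).lcm (fun k ↦ k * (m + 1).choose k) := by
        have hIcc : (Icc 0 m).image (· + 1) = Icc 1 (m + 1) := image_add_right_Icc 0 m 1
        rw [← hIcc, lcm_image, range_eq_Ico, Ico_add_one_right_eq_Icc]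
        rfl
    _ = lcmUpto (m + 1) := lcm_Icc_mul_choose_eq_lcmUpto _

theorem lcm_range_half_choose (m : ℕ) :
    (range (m / 2 + 1)).lcm m.choose = (range (m + 1)).lcm m.choose := by
  refine dvd_antisymm (lcm_mono (range_subset_range.2 (by omega))) (Finset.lcm_dvd fun k hk ↦ ?_)
  rw [mem_range] at hk
  rcases le_or_gt k (m / 2) with hk_half | hk_half
  · exact dvd_lcm (mem_range.2 (by omega))
  · rw [← choose_symm (by omega)]
    exact dvd_lcm (mem_range.2 (by omega))

end Nat

theorem farhi_identity_half (n : ℕ) (hn : 0 < n) :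
    n * (Finset.range ((n - 1) / 2 + 1)).lcm (n - 1).choose
      = (Finset.Icc 1 n).lcm id := by
  obtain ⟨m, rfl⟩ := Nat.exists_eq_add_one_of_ne_zero hn.ne'
  rw [Nat.add_sub_cancel, Nat.lcm_range_half_choose, Nat.succ_mul_lcm_choose_eq_lcmUpto,
    Nat.lcmUpto]
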